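/- Let A be an (m+1)×(m+1) real symmetric matrix with smallest eigenvalue λ₁. The set of unit vectors x maximizing ‖x xᵀ − A‖₀² consists of exactly two antipodal vectors {v, −v} (equivalently, the maximizer x xᵀ in j(ℝP^m) is unique) if and only if λ₁ is a simple eigenvalue of A; in that case the unique farthest point of j(ℝP^m) from A is P_{F,j}(A) = v vᵀ, where v is a unit eigenvector of A corresponding to λ₁. -/

import Mathlib

/-!
For a unit vector `x`, `Tr((x xᵀ - A)²) = Tr(A²) + 1 - 2 xᵀ A x`, so the farthest points of the
Veronese–Whitney image from `A` are the `x xᵀ` with `x` a unit minimiser of the Rayleigh quotient.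
Since `A - λ₁ I` is positive semidefinite and `xᵀ (A - λ₁ I) x = 0` forces `(A - λ₁ I) x = 0`,
these minimisers are exactly the unit `λ₁`-eigenvectors. As `x xᵀ = v vᵀ` holds for unit vectors
exactly when `x = ± v`, uniqueness of the farthest point amounts to the unit `λ₁`-eigenvectors
forming a single antipodal pair.
-/

open Matrix

section Antipodal

variable {V : Type*} [InvolutiveNeg V]

theorem exists_setOf_eq_pair_neg_iff {P : V → Prop} (hneg : ∀ v, P v → P (-v))
    (hne : ∃ v, P v) :
    (∃ v, {x | P x} = {v, -v}) ↔ ∀ w u, P w → P u → w = u ∨ w = -u := by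
  constructor
  · rintro ⟨v, hv⟩ w u hw hu
    have hw' : w ∈ ({v, -v} : Set V) := hv ▸ hw
    have hu' : u ∈ ({v, -v} : Set V) := hv ▸ hu
    rcases hw' with rfl | rfl <;> rcases hu' with rfl | rfl <;> simp
  · intro hpair
    obtain ⟨v, hv⟩ := hne
    refine ⟨v, Set.ext fun x => ⟨fun hx => hpair x v hx hv, ?_⟩⟩
    rintro (rfl | rfl)
    exacts [hv, hneg v hv]

end Antipodal

section VecMulVec

variable {n R : Type*} [Fintype n]

theorem trace_vecMulVec_mul [CommSemiring R] (a b : n → R) (M : Matrix n n R) :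
    trace (vecMulVec a b * M) = b ⬝ᵥ (M *ᵥ a) := by
  rw [vecMulVec_mul, trace_vecMulVec, dotProduct_mulVec, dotProduct_comm]

theorem trace_mul_self_vecMulVec_self_sub [CommRing R] (A : Matrix n n R) (x : n → R) :
    trace ((vecMulVec x x - A) * (vecMulVec x x - A))
      = trace (A * A) + (x ⬝ᵥ x) ^ 2 - 2 * (x ⬝ᵥ (A *ᵥ x)) := by
  have expand : (vecMulVec x x - A) * (vecMulVec x x - A)
      = vecMulVec x x * vecMulVec x x - vecMulVec x x * A - A * vecMulVec x x + A * A := by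
    noncomm_ring
  rw [expand, trace_add, trace_sub, trace_sub, trace_mul_comm A, trace_vecMulVec_mul,
    trace_vecMulVec_mul, vecMulVec_mulVec, dotProduct_smul]
  simp only [MulOpposite.smul_eq_mul_unop, MulOpposite.unop_op]
  ring

theorem vecMulVec_self_eq_iff [CommRing R] [NoZeroDivisors R] {x v : n → R}
    (hx : x ⬝ᵥ x = 1) (hv : v ⬝ᵥ v = 1) :
    vecMulVec x x = vecMulVec v v ↔ x = v ∨ x = -v := by
  refine ⟨fun h => ?_, ?_⟩
  · set c := v ⬝ᵥ x
    have hxv : x = c • v := by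
      simpa [vecMulVec_mulVec, hx] using congrArg (· *ᵥ x) h
    have hc : c * c = 1 := by
      simpa [hxv, hv, smul_dotProduct, dotProduct_smul, mul_assoc] using hx
    rcases mul_self_eq_one_iff.mp hc with h1 | h1 <;> simp [hxv, h1]
  · rintro (rfl | rfl)
    exacts [rfl, by rw [neg_vecMulVec, vecMulVec_neg, neg_neg]]

end VecMulVec

section Rayleigh

variable {n : Type*} [Fintype n] {A : Matrix n n ℝ} {lam : ℝ}

theorem dotProduct_sub_smul_one_mulVec [DecidableEq n] (x : n → ℝ) :
    x ⬝ᵥ ((A - lam • (1 : Matrix n n ℝ)) *ᵥ x) = x ⬝ᵥ (A *ᵥ x) - lam * (x ⬝ᵥ x) := by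
  rw [sub_mulVec, smul_mulVec, one_mulVec, dotProduct_sub, dotProduct_smul, smul_eq_mul]

theorem Matrix.IsSymm.posSemidef_sub_smul_one [DecidableEq n] (hA : A.IsSymm)
    (hmin : ∀ (c : ℝ) (w : n → ℝ), w ≠ 0 → A *ᵥ w = c • w → lam ≤ c) :
    (A - lam • (1 : Matrix n n ℝ)).PosSemidef := by
  have hB : (A - lam • (1 : Matrix n n ℝ)).IsHermitian :=
    IsHermitian.sub hA (by simp [IsHermitian])
  refine hB.posSemidef_iff_eigenvalues_nonneg.mpr fun i => ?_
  set w : n → ℝ := ⇑(hB.eigenvectorBasis i)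
  have hw : w ≠ 0 := fun h =>
    hB.eigenvectorBasis.orthonormal.ne_zero i (WithLp.ofLp_injective _ h)
  have hAw : A *ᵥ w = (hB.eigenvalues i + lam) • w := by
    have := hB.mulVec_eigenvectorBasis i
    rw [sub_mulVec, smul_mulVec, one_mulVec, sub_eq_iff_eq_add] at this
    rw [this, add_smul]
  simpa using hmin _ w hw hAw

variable (hA : A.IsSymm) (hmin : ∀ (c : ℝ) (w : n → ℝ), w ≠ 0 → A *ᵥ w = c • w → lam ≤ c)
include hA hmin

theorem mul_dotProduct_self_le_dotProduct_mulVec (x : n → ℝ) :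
    lam * (x ⬝ᵥ x) ≤ x ⬝ᵥ (A *ᵥ x) := by
  classical
  have := (hA.posSemidef_sub_smul_one hmin).dotProduct_mulVec_nonneg x
  rw [star_trivial, dotProduct_sub_smul_one_mulVec] at this
  linarith

theorem mulVec_eq_smul_of_dotProduct_mulVec_eq {x : n → ℝ}
    (h : x ⬝ᵥ (A *ᵥ x) = lam * (x ⬝ᵥ x)) : A *ᵥ x = lam • x := by
  classical
  have h0 := (hA.posSemidef_sub_smul_one hmin).dotProduct_mulVec_zero_iff x
  rw [star_trivial, dotProduct_sub_smul_one_mulVec, h, sub_self, sub_mulVec, smul_mulVec,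
    one_mulVec, sub_eq_zero] at h0
  exact h0.mp rfl

end Rayleigh

section Farthest

variable {n : Type*} [Fintype n]

/-- `j([x]) = x xᵀ` is a farthest point of `j(ℝPᵐ)` from `A` for `‖·‖₀`. -/
def IsVWFarthest (A : Matrix n n ℝ) (x : n → ℝ) : Prop :=
  x ⬝ᵥ x = 1 ∧ ∀ y : n → ℝ, y ⬝ᵥ y = 1 →
    trace ((vecMulVec y y - A) * (vecMulVec y y - A))
      ≤ trace ((vecMulVec x x - A) * (vecMulVec x x - A))

theorem isVWFarthest_iff_forall_dotProduct_mulVec_le {A : Matrix n n ℝ} {x : n → ℝ} :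
    IsVWFarthest A x ↔
      x ⬝ᵥ x = 1 ∧ ∀ y : n → ℝ, y ⬝ᵥ y = 1 → x ⬝ᵥ (A *ᵥ x) ≤ y ⬝ᵥ (A *ᵥ y) := by
  refine and_congr_right fun hx => forall₂_congr fun y hy => ?_
  rw [trace_mul_self_vecMulVec_self_sub, trace_mul_self_vecMulVec_self_sub, hx, hy]
  constructor <;> intro h <;> linarith

theorem isVWFarthest_iff_mulVec_eq_smul {A : Matrix n n ℝ} {lam : ℝ} (hA : A.IsSymm)
    (hev : ∃ v : n → ℝ, v ⬝ᵥ v = 1 ∧ A *ᵥ v = lam • v)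
    (hmin : ∀ (c : ℝ) (w : n → ℝ), w ≠ 0 → A *ᵥ w = c • w → lam ≤ c) {x : n → ℝ} :
    IsVWFarthest A x ↔ x ⬝ᵥ x = 1 ∧ A *ᵥ x = lam • x := by
  have rayleigh_of_eigen {y : n → ℝ} (hy : y ⬝ᵥ y = 1) (hAy : A *ᵥ y = lam • y) :
      y ⬝ᵥ (A *ᵥ y) = lam := by
    rw [hAy, dotProduct_smul, hy, smul_eq_mul, mul_one]
  rw [isVWFarthest_iff_forall_dotProduct_mulVec_le]
  refine and_congr_right fun hx => ⟨fun hle => ?_, fun hAx y hy => ?_⟩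
  · obtain ⟨v, hv, hAv⟩ := hev
    have hlb := mul_dotProduct_self_le_dotProduct_mulVec hA hmin x
    have hub := hle v hv
    rw [rayleigh_of_eigen hv hAv] at hub
    exact mulVec_eq_smul_of_dotProduct_mulVec_eq hA hmin (by rw [hx] at hlb ⊢; linarith)
  · simpa [rayleigh_of_eigen hx hAx, hy] using mul_dotProduct_self_le_dotProduct_mulVec hA hmin y

end Farthest

/-- Let `A` be an `(m+1)×(m+1)` real symmetric matrix with smallest
eigenvalue `λ₁`. The set of unit vectors maximizing `Tr((x xᵀ - A)²)` consists of
exactly two antipodal vectors `{v, -v}` iff `λ₁` is a simple eigenvalue (formulated: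
any two unit `λ₁`-eigenvectors agree up to sign); in that case, for `v` a unit
eigenvector for `λ₁`, the unique farthest point of `j(ℝP^m)` from `A` is `v vᵀ`:
a unit vector `x` is a maximizer iff `x xᵀ = v vᵀ`. -/
theorem vw_farthest_projection_unique_iff_simple (m : ℕ)
    (A : Matrix (Fin (m + 1)) (Fin (m + 1)) ℝ) (hA : A.IsSymm) (lam : ℝ)
    (hev : ∃ v : Fin (m + 1) → ℝ, v ⬝ᵥ v = 1 ∧ A *ᵥ v = lam • v)
    (hmin : ∀ (c : ℝ) (w : Fin (m + 1) → ℝ), w ≠ 0 → A *ᵥ w = c • w → lam ≤ c) :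
    ((∃ v : Fin (m + 1) → ℝ,
        {x : Fin (m + 1) → ℝ | x ⬝ᵥ x = 1 ∧ ∀ y : Fin (m + 1) → ℝ, y ⬝ᵥ y = 1 →
            Matrix.trace ((vecMulVec y y - A) * (vecMulVec y y - A))
              ≤ Matrix.trace ((vecMulVec x x - A) * (vecMulVec x x - A))}
          = {v, -v}) ↔
      (∀ w u : Fin (m + 1) → ℝ, w ⬝ᵥ w = 1 → u ⬝ᵥ u = 1 →
        A *ᵥ w = lam • w → A *ᵥ u = lam • u → (w = u ∨ w = -u))) ∧
    ((∀ w u : Fin (m + 1) → ℝ, w ⬝ᵥ w = 1 → u ⬝ᵥ u = 1 →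
        A *ᵥ w = lam • w → A *ᵥ u = lam • u → (w = u ∨ w = -u)) →
      ∀ v : Fin (m + 1) → ℝ, v ⬝ᵥ v = 1 → A *ᵥ v = lam • v →
        ∀ x : Fin (m + 1) → ℝ, x ⬝ᵥ x = 1 →
          ((∀ y : Fin (m + 1) → ℝ, y ⬝ᵥ y = 1 →
              Matrix.trace ((vecMulVec y y - A) * (vecMulVec y y - A))
                ≤ Matrix.trace ((vecMulVec x x - A) * (vecMulVec x x - A))) ↔
            vecMulVec x x = vecMulVec v v)) := by
  have hfar (x : Fin (m + 1) → ℝ) := isVWFarthest_iff_mulVec_eq_smul (x := x) hA hev hmin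
  have hneg (v : Fin (m + 1) → ℝ) (hv : v ⬝ᵥ v = 1 ∧ A *ᵥ v = lam • v) :
      (-v) ⬝ᵥ (-v) = 1 ∧ A *ᵥ (-v) = lam • (-v) := by
    rw [neg_dotProduct_neg, mulVec_neg, smul_neg, hv.1, hv.2]
    exact ⟨rfl, rfl⟩
  refine ⟨?_, fun hsimple v hv hAv x hx => ?_⟩
  · change (∃ v, {x | IsVWFarthest A x} = {v, -v}) ↔ _
    simp only [hfar, exists_setOf_eq_pair_neg_iff hneg hev, and_imp]
    exact forall₂_congr fun w u => ⟨fun h hw hu hAw hAu => h hw hAw hu hAu,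
      fun h hw hAw hu hAu => h hw hu hAw hAu⟩
  · calc _ ↔ IsVWFarthest A x := (and_iff_right hx).symm
      _ ↔ A *ᵥ x = lam • x := (hfar x).trans (and_iff_right hx)
      _ ↔ x = v ∨ x = -v := ⟨fun hAx => hsimple x v hx hv hAx hAv, by
          rintro (rfl | rfl)
          exacts [hAv, (hneg v ⟨hv, hAv⟩).2]⟩
      _ ↔ vecMulVec x x = vecMulVec v v := (vecMulVec_self_eq_iff hx hv).symm
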